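/- Assume the closures of F(w) and F(w') are disjoint for all distinct words w, w' of equal length, and assume the separation condition: there exist ε₀ > 0 and n ∈ ℕ such that for every word w of length n there is a word w' of length n with d(a, b) ≥ ε₀ for all a ∈ closure(F(w)) and b ∈ closure(F(w')). Then the similarity map φ possesses an unpredictable point, i.e., there exist x ∈ 𝓕, ε > 0, and sequences of natural numbers (tₖ) and (sₖ) with tₖ → ∞ and sₖ → ∞ such that φ^{tₖ}(x) → x as k → ∞ and d(φ^{tₖ+sₖ}(x), φ^{sₖ}(x)) ≥ ε for all k. -/

import Mathlib

open Filter Set Metric Topology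

/-- The length-`n` prefix word `(i 0, i 1, ..., i (n-1))` of an infinite sequence `i`. -/
def wordPrefix {m : ℕ} (i : ℕ → Fin m) (n : ℕ) : List (Fin m) :=
  (List.range n).map i

/-! Build a sequence `i` from the words `P 0 = zⁿ`, `P (k + 1) = P k ++ P k ++ w`, where `w` is
the word that the separation condition attaches to `zⁿ`. With `L k = |P k|`, the shift of `i` by
`L k` agrees with `i` on its first `L k` letters, so `φ^[L k] (π i) → π i` by the diameter
condition; and `φ^[L k] (π i)`, `φ^[2 L k] (π i)` lie in the closures of `F zⁿ` and `F w`
respectively, which are `ε₀` apart. -/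

section Words

variable {m : ℕ}

@[simp]
lemma length_wordPrefix (i : ℕ → Fin m) (n : ℕ) : (wordPrefix i n).length = n := by
  simp [wordPrefix]

lemma wordPrefix_add (i : ℕ → Fin m) (a b : ℕ) :
    wordPrefix i (a + b) = wordPrefix i a ++ wordPrefix (fun q => i (q + a)) b := by
  simp only [wordPrefix, List.range_add, List.map_append, List.map_map]
  congr 2
  ext q
  simp [Nat.add_comm]

lemma take_wordPrefix (i : ℕ → Fin m) {a b : ℕ} (hab : a ≤ b) :
    (wordPrefix i b).take a = wordPrefix i a := by
  rw [wordPrefix, ← List.map_take, List.take_range, min_eq_left hab, wordPrefix]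

lemma exists_wordPrefix_eq_of_isPrefix {P : ℕ → List (Fin m)} (hP : ∀ k, P k <+: P (k + 1))
    (hlen : ∀ k, k < (P k).length) : ∃ i : ℕ → Fin m, ∀ k, wordPrefix i (P k).length = P k := by
  have hmono : ∀ {a b}, a ≤ b → P a <+: P b := fun hab =>
    Nat.rel_of_forall_rel_succ_of_le (· <+: ·) hP hab
  refine ⟨fun j => (P j)[j]'(hlen j), fun k => List.ext_getElem (by simp) fun q hq hq' => ?_⟩
  simp only [wordPrefix, List.getElem_map, List.getElem_range]
  rcases le_total q k with hqk | hkq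
  · exact (hmono hqk).getElem (hlen q)
  · exact ((hmono hkq).getElem hq').symm

end Words

section Doubling

variable {α : Type*}

def doublingWord (u v : List α) : ℕ → List α
  | 0 => u
  | k + 1 => doublingWord u v k ++ doublingWord u v k ++ v

lemma doublingWord_isPrefix_succ (u v : List α) (k : ℕ) :
    doublingWord u v k <+: doublingWord u v (k + 1) := by
  rw [doublingWord, List.append_assoc]
  exact List.prefix_append _ _

lemma doublingWord_isPrefix (u v : List α) (k : ℕ) : u <+: doublingWord u v k :=
  Nat.rel_of_forall_rel_succ_of_le (· <+: ·) (doublingWord_isPrefix_succ u v) k.zero_le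

lemma add_length_le_length_doublingWord {u : List α} (hu : u ≠ []) (v : List α) (k : ℕ) :
    k + u.length ≤ (doublingWord u v k).length := by
  induction k with
  | zero => simp [doublingWord]
  | succ k ih =>
    have : 0 < (doublingWord u v k).length := by
      have := List.length_pos_iff.2 hu
      omega
    simp only [doublingWord, List.length_append]
    omega

end Doubling

lemma exists_recurrent_sequence {m : ℕ} {u : List (Fin m)} (hu : u ≠ []) (v : List (Fin m)) :
    ∃ (i : ℕ → Fin m) (L : ℕ → ℕ), Tendsto L atTop atTop ∧ ∀ k,
      wordPrefix (fun q => i (q + L k)) (L k) = wordPrefix i (L k) ∧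
      wordPrefix (fun q => i (q + L k)) u.length = u ∧
      wordPrefix (fun q => i (q + (L k + L k))) v.length = v := by
  set P := doublingWord u v
  have hlen := add_length_le_length_doublingWord hu v
  obtain ⟨i, hi⟩ := exists_wordPrefix_eq_of_isPrefix (doublingWord_isPrefix_succ u v)
    fun k => by have := hlen k; have := List.length_pos_iff.2 hu; omega
  refine ⟨i, fun k => (P k).length,
    tendsto_atTop_mono (fun k => (Nat.le_add_right k _).trans (hlen k)) tendsto_id,
    fun k => ?_⟩
  have hsplit : wordPrefix i (P k).length ++ wordPrefix (fun q => i (q + (P k).length)) (P k).length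
      ++ wordPrefix (fun q => i (q + ((P k).length + (P k).length))) v.length
      = P k ++ P k ++ v := by
    rw [← wordPrefix_add, ← wordPrefix_add]
    simpa only [doublingWord, List.length_append] using hi (k + 1)
  obtain ⟨hPP, hv⟩ := List.append_inj hsplit (by simp)
  obtain ⟨hP, hP'⟩ := List.append_inj hPP (by simp)
  have hu_le : u.length ≤ (P k).length := (doublingWord_isPrefix u v k).length_le
  refine ⟨hP'.trans hP.symm, ?_, hv⟩
  rw [← take_wordPrefix _ hu_le, hP', ← List.prefix_iff_eq_take.1 (doublingWord_isPrefix u v k)]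

section Coding

variable {X : Type*} [PseudoMetricSpace X] {m : ℕ} {F : List (Fin m) → Set X}
  {π : (ℕ → Fin m) → X}

lemma coding_mem_closure (hπ : ∀ i : ℕ → Fin m, (⋂ n : ℕ, closure (F (wordPrefix i n))) = {π i})
    (i : ℕ → Fin m) (n : ℕ) : π i ∈ closure (F (wordPrefix i n)) :=
  mem_iInter.1 ((hπ i).symm ▸ mem_singleton (π i)) n

lemma dist_coding_le_iSup_diam [BoundedSpace X]
    (hπ : ∀ i : ℕ → Fin m, (⋂ n : ℕ, closure (F (wordPrefix i n))) = {π i})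
    {i j : ℕ → Fin m} {n : ℕ} (h : wordPrefix i n = wordPrefix j n) :
    dist (π i) (π j) ≤ ⨆ w : {w : List (Fin m) // w.length = n}, diam (F w.1) := by
  have hbdd : BddAbove (range fun w : {w : List (Fin m) // w.length = n} => diam (F w.1)) :=
    ⟨diam (univ : Set X), by
      rintro _ ⟨w, rfl⟩
      exact diam_mono (subset_univ _) (Bornology.IsBounded.all _)⟩
  have hj := coding_mem_closure hπ j n
  rw [← h] at hj
  calc dist (π i) (π j) ≤ diam (closure (F (wordPrefix i n))) :=
        dist_le_diam_of_mem (Bornology.IsBounded.all _) (coding_mem_closure hπ i n) hj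
    _ = diam (F (wordPrefix i n)) := diam_closure _
    _ ≤ _ := le_ciSup hbdd ⟨wordPrefix i n, length_wordPrefix i n⟩

lemma tendsto_coding_of_wordPrefix_eq [BoundedSpace X]
    (hπ : ∀ i : ℕ → Fin m, (⋂ n : ℕ, closure (F (wordPrefix i n))) = {π i})
    (hdiam : Tendsto (fun n => ⨆ w : {w : List (Fin m) // w.length = n}, diam (F w.1))
      atTop (𝓝 0))
    {L : ℕ → ℕ} (hL : Tendsto L atTop atTop) {j : ℕ → ℕ → Fin m} {i : ℕ → Fin m}
    (h : ∀ k, wordPrefix (j k) (L k) = wordPrefix i (L k)) :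
    Tendsto (fun k => π (j k)) atTop (𝓝 (π i)) :=
  tendsto_iff_dist_tendsto_zero.2 <| squeeze_zero (fun _ => dist_nonneg)
    (fun k => dist_coding_le_iSup_diam hπ (h k)) (hdiam.comp hL)

end Coding

lemma coe_iterate_coding {X : Type*} {m : ℕ} {π : (ℕ → Fin m) → X}
    {φ : Set.range π → Set.range π}
    (hφ : ∀ i : ℕ → Fin m, (φ ⟨π i, Set.mem_range_self i⟩ : X) = π (fun n => i (n + 1)))
    (t : ℕ) (i : ℕ → Fin m) :
    (φ^[t] ⟨π i, Set.mem_range_self i⟩ : X) = π (fun q => i (q + t)) := by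
  induction t generalizing i with
  | zero => rfl
  | succ t ih =>
    have hstep : φ ⟨π i, _⟩ = ⟨π (fun n => i (n + 1)), mem_range_self _⟩ := Subtype.ext (hφ i)
    rw [Function.iterate_succ_apply, hstep, ih]
    simp only [Nat.add_assoc]

theorem abstract_fractal_similarity_map_unpredictable_general
    {X : Type*} [MetricSpace X] [CompactSpace X] {m : ℕ} (hm : 2 ≤ m)
    (F : List (Fin m) → Set X)
    (hdiam : Tendsto
      (fun n => ⨆ w : {w : List (Fin m) // w.length = n}, Metric.diam (F w.1))
      atTop (𝓝 0))
    (π : (ℕ → Fin m) → X)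
    (hπ : ∀ i : ℕ → Fin m, (⋂ n : ℕ, closure (F (wordPrefix i n))) = {π i})
    (φ : Set.range π → Set.range π)
    (hφ : ∀ i : ℕ → Fin m,
      (φ ⟨π i, Set.mem_range_self i⟩ : X) = π (fun n => i (n + 1)))
    (ε₀ : ℝ) (hε₀ : 0 < ε₀) (n : ℕ)
    (hsep : ∀ w : List (Fin m), w.length = n → ∃ w' : List (Fin m), w'.length = n ∧
      ∀ a ∈ closure (F w), ∀ b ∈ closure (F w'), ε₀ ≤ dist a b) :
    ∃ x : Set.range π, ∃ ε : ℝ, 0 < ε ∧ ∃ t s : ℕ → ℕ,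
      Tendsto t atTop atTop ∧ Tendsto s atTop atTop ∧
      Tendsto (fun k => φ^[t k] x) atTop (𝓝 x) ∧
      ∀ k : ℕ, ε ≤ dist (φ^[t k + s k] x : X) (φ^[s k] x : X) := by
  let z : Fin m := ⟨0, by omega⟩
  set u := List.replicate n z
  obtain ⟨w, hwl, hw⟩ := hsep u List.length_replicate
  have hu : u ≠ [] := by
    rintro hu
    obtain rfl : n = 0 := by simpa [u] using hu
    obtain rfl := List.length_eq_zero_iff.1 hwl
    have hz := coding_mem_closure hπ (fun _ => z) 0
    have := hw _ (by simpa [u, wordPrefix] using hz) _ (by simpa [wordPrefix] using hz)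
    simp only [dist_self] at this
    linarith
  obtain ⟨i, L, hL, hi⟩ := exists_recurrent_sequence hu w
  refine ⟨⟨π i, mem_range_self i⟩, ε₀, hε₀, L, L, hL, hL, ?_, fun k => ?_⟩
  · rw [tendsto_subtype_rng]
    simp only [coe_iterate_coding hφ]
    exact tendsto_coding_of_wordPrefix_eq hπ hdiam hL fun k => (hi k).1
  · rw [coe_iterate_coding hφ, coe_iterate_coding hφ, dist_comm]
    refine hw _ ?_ _ ?_
    · simpa [(hi k).2.1] using coding_mem_closure hπ (fun q => i (q + L k)) u.length
    · simpa only [(hi k).2.2] using coding_mem_closure hπ (fun q => i (q + (L k + L k))) w.length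

/-- Under the separation condition, the similarity map `φ` possesses an unpredictable point. -/
theorem abstract_fractal_similarity_map_unpredictable
    {X : Type*} [MetricSpace X] [CompactSpace X] {m : ℕ} (hm : 2 ≤ m)
    (F : List (Fin m) → Set X)
    (hne : ∀ w : List (Fin m), (F w).Nonempty)
    (hnest : ∀ (w : List (Fin m)) (j : Fin m), F (w ++ [j]) ⊆ F w)
    (hdiam : Tendsto
      (fun n => ⨆ w : {w : List (Fin m) // w.length = n}, Metric.diam (F w.1))
      atTop (𝓝 0))
    (π : (ℕ → Fin m) → X)
    (hπ : ∀ i : ℕ → Fin m, (⋂ n : ℕ, closure (F (wordPrefix i n))) = {π i})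
    (hdisj : ∀ w w' : List (Fin m), w.length = w'.length → w ≠ w' →
      Disjoint (closure (F w)) (closure (F w')))
    (φ : Set.range π → Set.range π)
    (hφ : ∀ i : ℕ → Fin m,
      (φ ⟨π i, Set.mem_range_self i⟩ : X) = π (fun n => i (n + 1)))
    (ε₀ : ℝ) (hε₀ : 0 < ε₀) (n : ℕ)
    (hsep : ∀ w : List (Fin m), w.length = n → ∃ w' : List (Fin m), w'.length = n ∧
      ∀ a ∈ closure (F w), ∀ b ∈ closure (F w'), ε₀ ≤ dist a b) :
    ∃ x : Set.range π, ∃ ε : ℝ, 0 < ε ∧ ∃ t s : ℕ → ℕ,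
      Tendsto t atTop atTop ∧ Tendsto s atTop atTop ∧
      Tendsto (fun k => φ^[t k] x) atTop (𝓝 x) ∧
      ∀ k : ℕ, ε ≤ dist (φ^[t k + s k] x : X) (φ^[s k] x : X) :=
  abstract_fractal_similarity_map_unpredictable_general hm F hdiam π hπ φ hφ ε₀ hε₀ n hsep
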